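/- The map ε is a left counit for Δ on FN(X): (ε ⊗ id)Δ(w) = 1_k ⊗ w for all w ∈ FN(X). -/

import Mathlib

/-! `ε` reads off the coefficient of the empty word, and it is multiplicative for `⋄`: away from
a junction `⌊a⌋⌊b⌋` the product `⋄` is concatenation, and at such a junction the middle factor
`⌊a⌋ ⋄ ⌊b⌋` lies in the image of `N_X`, which `ε` kills. Hence `a ⊗ b ↦ ε(a) b` is multiplicative
on `FN(X) ⊗ FN(X)` and commutes with `id ⊗ N_X`, so it is a left inverse of `Δ` on every word,
by induction on the degree along the defining recursion of `Δ`. -/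

open scoped TensorProduct

universe u v w

/-- Letters of bracketed words in `X`: either a variable from `X` or a bracket
`⌊u⌋` enclosing a (bracketed) word `u`. Lists of letters are exactly the bracketed
words, i.e. the elements of the free operated monoid `𝔐(X)`. -/
inductive Lt (X : Type u) : Type u
  | var : X → Lt X
  | brk : List (Lt X) → Lt X

namespace Nij

noncomputable section

variable {X : Type u}

/-- Two letters may be adjacent in an "alternating" word iff they are not both brackets. -/
def altP : Lt X → Lt X → Prop
  | Lt.brk _, Lt.brk _ => False
  | _, _ => True

/-- A letter is good (i.e. lies in `X ⊔ ⌊𝔛_∞⌋`) if each bracket encloses a word whose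
letters are good and in which no two consecutive letters are brackets. -/
inductive GoodL : Lt X → Prop
  | var (x : X) : GoodL (Lt.var x)
  | brk (u : List (Lt X)) (h1 : ∀ a ∈ u, GoodL a) (h2 : List.Chain' altP u) :
      GoodL (Lt.brk u)

/-- The words in `𝔛_∞`: all letters good and no two consecutive brackets. -/
def GoodW (w : List (Lt X)) : Prop := (∀ a ∈ w, GoodL a) ∧ List.Chain' altP w

/-- The set `𝔛_∞` of basis words of the free Nijenhuis algebra. -/
def NW (X : Type u) : Type u := {w : List (Lt X) // GoodW w}

/-- The free Nijenhuis algebra `FN(X) = k𝔛_∞` as a `k`-module. -/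
abbrev FN (k : Type v) [CommRing k] (X : Type u) : Type (max u v) := NW X →₀ k

/-- The empty word `1 ∈ 𝔛_∞`. -/
def one : NW X := ⟨[], by constructor <;> first | simp | exact List.isChain_nil⟩

/-- A single good letter forms a good word. -/
lemma goodW_singleton {a : Lt X} (h : GoodL a) : GoodW [a] := by
  constructor
  · intro b hb
    rw [List.mem_singleton] at hb
    exact hb ▸ h
  · exact List.isChain_singleton _

/-- The single-letter word `x ∈ 𝔛_∞` for `x ∈ X`. -/
def varW (x : X) : NW X := ⟨[Lt.var x], goodW_singleton (GoodL.var x)⟩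

/-- The word `⌊w⌋ ∈ 𝔛_∞` for `w ∈ 𝔛_∞`. -/
def NopW (w : NW X) : NW X := ⟨[Lt.brk w.1], goodW_singleton (GoodL.brk _ w.2.1 w.2.2)⟩

/-- The single-letter word `[a] ∈ 𝔛_∞` for a good letter `a ∈ X ⊔ ⌊𝔛_∞⌋`. -/
def letterW (a : Lt X) (h : GoodL a) : NW X := ⟨[a], goodW_singleton h⟩

variable (k : Type v) [CommRing k]

/-- The basis element of `FN(X)` corresponding to `w ∈ 𝔛_∞`. -/
def bw (w : NW X) : FN k X := Finsupp.single w 1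

/-- The Nijenhuis operator `N_X` on `FN(X)`, the linear extension of `w ↦ ⌊w⌋`. -/
def Nop : FN k X →ₗ[k] FN k X := Finsupp.lmapDomain k k NopW

/-- The natural linear embedding `k𝔛_∞ → k𝔐(X)` into the monoid algebra of the free
monoid of bracketed words, used to express concatenation of words linearly. -/
def iota : FN k X →ₗ[k] MonoidAlgebra k (FreeMonoid (Lt X)) :=
  (MonoidAlgebra.coeffLinearEquiv k).symm.toLinearMap ∘ₗ
    Finsupp.lmapDomain k k (fun w : NW X => FreeMonoid.ofList w.1)

/-- The left counit `ε : FN(X) → k`, `ε(1) = 1` and `ε(w) = 0` for `1 ≠ w ∈ 𝔛_∞`. -/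
def eps : FN k X →ₗ[k] k := Finsupp.lapply one

/-- A specification of the product `⋄` on `FN(X) = k𝔛_∞`: a `k`-bilinear map satisfying
the defining recursive equations of the paper. These equations determine `⋄` uniquely.

* `concat`: if the last letter of `u` and the first letter of `v` are not both brackets
  (in particular if `u` or `v` is empty), then `u ⋄ v` is the concatenation `uv`.
* `brkbrk`: `⌊ū⌋ ⋄ ⌊v̄⌋ = ⌊ū ⋄ ⌊v̄⌋⌋ + ⌊⌊ū⌋ ⋄ v̄⌋ − ⌊⌊ū ⋄ v̄⌋⌋`.
* `split`: if `u = u₀a` and `v = bv₀` then `u ⋄ v = u₀ (a ⋄ b) v₀`, the outer products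
  being concatenation (expressed in the monoid algebra `k𝔐(X)` via `iota`). -/
structure DiamondSpec (k : Type v) (X : Type u) [CommRing k] where
  mul : FN k X →ₗ[k] FN k X →ₗ[k] FN k X
  concat : ∀ u v : NW X,
    (¬ ∃ (a b : List (Lt X)), u.1.getLast? = some (Lt.brk a) ∧ v.1.head? = some (Lt.brk b)) →
    iota k (mul (bw k u) (bw k v)) = iota k (bw k u) * iota k (bw k v)
  brkbrk : ∀ u v : NW X,
    mul (Nop k (bw k u)) (Nop k (bw k v)) =
      Nop k (mul (bw k u) (Nop k (bw k v))) + Nop k (mul (Nop k (bw k u)) (bw k v))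
        - Nop k (Nop k (mul (bw k u) (bw k v)))
  split : ∀ (u v : NW X) (u₀ v₀ : List (Lt X)) (a b : Lt X)
      (ha : GoodW [a]) (hb : GoodW [b]),
      u.1 = u₀ ++ [a] → v.1 = b :: v₀ →
      iota k (mul (bw k u) (bw k v)) =
        MonoidAlgebra.of k (FreeMonoid (Lt X)) (FreeMonoid.ofList u₀) *
          iota k (mul (bw k ⟨[a], ha⟩) (bw k ⟨[b], hb⟩)) *
          MonoidAlgebra.of k (FreeMonoid (Lt X)) (FreeMonoid.ofList v₀)

/-- The componentwise product on `FN(X) ⊗ FN(X)` induced by `⋄`: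
`(a ⊗ b) ⋄ (c ⊗ d) = (a ⋄ c) ⊗ (b ⋄ d)`. -/
def mul2 (d : DiamondSpec k X) :
    (FN k X ⊗[k] FN k X) →ₗ[k] (FN k X ⊗[k] FN k X) →ₗ[k] (FN k X ⊗[k] FN k X) :=
  TensorProduct.lift <| LinearMap.mk₂ k
    (fun a b => TensorProduct.map (d.mul a) (d.mul b))
    (fun a a' b => by simp only [map_add, TensorProduct.map_add_left])
    (fun c a b => by simp only [map_smul, TensorProduct.map_smul_left])
    (fun a b b' => by simp only [map_add, TensorProduct.map_add_right])
    (fun c a b => by simp only [map_smul, TensorProduct.map_smul_right])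

/-- A specification of the coproduct `Δ` on `FN(X)`: a `k`-linear map satisfying the
defining equations of the paper. These equations determine `Δ` uniquely.

* `delta_one`: `Δ(1) = 1 ⊗ 1`;
* `delta_var`: `Δ(x) = 1 ⊗ x` for `x ∈ X`;
* `delta_brk`: `Δ(⌊w⌋) = (id ⊗ N_X) Δ(w)` (the 1-cocycle condition on basis elements);
* `delta_split`: `Δ(w₁ ⋄ ⋯ ⋄ w_m) = Δ(w₁) ⋄ (Δ(w₂) ⋄ ⋯ ⋄ Δ(w_m))` for the alternating
  `⋄`-factorization of a word into its letters, stated in its binary recursive form. -/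
structure DeltaSpec (k : Type v) (X : Type u) [CommRing k] extends DiamondSpec k X where
  delta : FN k X →ₗ[k] FN k X ⊗[k] FN k X
  delta_one : delta (bw k one) = bw k one ⊗ₜ[k] bw k one
  delta_var : ∀ x : X, delta (bw k (varW x)) = bw k one ⊗ₜ[k] bw k (varW x)
  delta_brk : ∀ w : NW X,
    delta (Nop k (bw k w)) = LinearMap.lTensor (FN k X) (Nop k) (delta (bw k w))
  delta_split : ∀ (w : NW X) (a : Lt X) (rest : List (Lt X))
      (ha : GoodW [a]) (hrest : GoodW rest), w.1 = a :: rest → rest ≠ [] →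
      delta (bw k w) =
        mul2 k toDiamondSpec (delta (bw k ⟨[a], ha⟩)) (delta (bw k ⟨rest, hrest⟩))

/-- The product `w₁ ⋄ w₂ ⋄ ⋯ ⋄ w_m ∈ FN(X)` of a sequence of letters from `X ⊔ ⌊𝔛_∞⌋`
(the empty product being `1`). -/
def prodOf (d : DiamondSpec k X) : (l : List (Lt X)) → (∀ a ∈ l, GoodL a) → FN k X
  | [], _ => bw k one
  | a :: rest, h =>
      d.mul (bw k (letterW a (h a (List.mem_cons_self (a := a) (l := rest)))))
        (prodOf d rest (fun b hb => h b (List.mem_cons_of_mem a hb)))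

mutual
  /-- The degree of a letter: `deg(x) = 1` for `x ∈ X`, `deg(⌊u⌋) = 1 + deg(u)`. -/
  def degL : Lt X → ℕ
    | Lt.var _ => 1
    | Lt.brk u => 1 + degList u
  /-- The degree of a bracketed word: the total number of occurrences of elements of `X`
  and of brackets `⌊·⌋` in it. -/
  def degList : List (Lt X) → ℕ
    | [] => 0
    | a :: rest => degL a + degList rest
end

/-- The homogeneous component `FN^(n)`: the `k`-span of the basis words of degree `n`. -/
def FNdeg (n : ℕ) : Submodule k (FN k X) :=
  Submodule.span k {f | ∃ w : NW X, degList w.1 = n ∧ f = bw k w}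

/-- The image `A ⊗ B` of the tensor product of two submodules inside `M ⊗ M`. -/
def tsub {M : Type w} [AddCommGroup M] [Module k M] (A B : Submodule k M) :
    Submodule k (M ⊗[k] M) :=
  Submodule.span k {x | ∃ a ∈ A, ∃ b ∈ B, x = a ⊗ₜ[k] b}

lemma goodW_of_goodL_brk {u : List (Lt X)} (h : GoodL (Lt.brk u)) : GoodW u := by
  cases h with
  | brk _ h1 h2 => exact ⟨h1, h2⟩

lemma GoodW.tail {a : Lt X} {l : List (Lt X)} (h : GoodW (a :: l)) : GoodW l :=
  ⟨fun b hb => h.1 b (List.mem_cons_of_mem a hb), h.2.tail⟩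

lemma GoodW.head {a : Lt X} {l : List (Lt X)} (h : GoodW (a :: l)) : GoodW [a] :=
  goodW_singleton (h.1 a List.mem_cons_self)

lemma degL_pos (a : Lt X) : 0 < degL a := by
  cases a <;> simp only [degL] <;> omega

lemma Nop_bw (w : NW X) : Nop k (bw k w) = bw k (NopW w) :=
  Finsupp.mapDomain_single

lemma eps_bw_one : eps k (bw k (one : NW X)) = 1 :=
  Finsupp.single_eq_same

lemma eps_bw_of_ne {w : NW X} (h : w ≠ one) : eps k (bw k w) = 0 :=
  Finsupp.single_eq_of_ne h.symm

lemma NopW_ne_one (w : NW X) : NopW w ≠ one :=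
  fun h => List.cons_ne_nil _ _ (congrArg Subtype.val h)

lemma eps_Nop (f : FN k X) : eps k (Nop k f) = 0 := by
  suffices eps k ∘ₗ Nop k = 0 from LinearMap.congr_fun this f
  ext w
  show eps k (Nop k (bw k w)) = 0
  rw [Nop_bw, eps_bw_of_ne k (NopW_ne_one w)]

lemma iota_bw (w : NW X) : iota k (bw k w) = MonoidAlgebra.single (FreeMonoid.ofList w.1) 1 :=
  congrArg MonoidAlgebra.ofCoeff Finsupp.mapDomain_single

lemma iota_injective : Function.Injective (iota k (X := X)) :=
  (MonoidAlgebra.coeffLinearEquiv k).symm.injective.comp <| Finsupp.mapDomain_injective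
    fun _ _ huv => Subtype.ext (congrArg FreeMonoid.toList huv)

section Augmentation

variable {α : Type*}

/-- The coefficient of the empty word: `FreeMonoid.lift fun _ => 0` is the indicator of `1`. -/
def emptyWordCoeff : MonoidAlgebra k (FreeMonoid α) →ₐ[k] k :=
  MonoidAlgebra.lift k k (FreeMonoid α) (FreeMonoid.lift fun _ => (0 : k))

lemma emptyWordCoeff_single (l : List α) (c : k) :
    emptyWordCoeff k (MonoidAlgebra.single (FreeMonoid.ofList l) c) =
      if l = [] then c else 0 := by
  cases l <;> simp [emptyWordCoeff, MonoidAlgebra.lift_single, FreeMonoid.lift_ofList]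

end Augmentation

lemma eps_eq_emptyWordCoeff_iota (f : FN k X) : eps k f = emptyWordCoeff k (iota k f) := by
  suffices eps k = (emptyWordCoeff k).toLinearMap ∘ₗ iota k from LinearMap.congr_fun this f
  ext w
  show eps k (bw k w) = emptyWordCoeff k (iota k (bw k w))
  rw [iota_bw, emptyWordCoeff_single]
  split_ifs with h
  · rw [show w = one from Subtype.ext h, eps_bw_one]
  · exact eps_bw_of_ne k fun hw => h (congrArg Subtype.val hw)

namespace DiamondSpec

variable {k} (d : DiamondSpec k X)

lemma mul_bw_of_append {u v w : NW X} (hw : w.1 = u.1 ++ v.1)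
    (hc : ¬ ∃ a b : List (Lt X),
      u.1.getLast? = some (Lt.brk a) ∧ v.1.head? = some (Lt.brk b)) :
    d.mul (bw k u) (bw k v) = bw k w := by
  apply iota_injective k
  rw [d.concat u v hc, iota_bw, iota_bw, iota_bw, MonoidAlgebra.single_mul_single, one_mul, hw]
  rfl

lemma eps_mul_bw_NopW (u v : NW X) : eps k (d.mul (bw k (NopW u)) (bw k (NopW v))) = 0 := by
  rw [← Nop_bw, ← Nop_bw, d.brkbrk, map_sub, map_add, eps_Nop, eps_Nop, eps_Nop, add_zero,
    sub_zero]

lemma eps_mul_bw (u v : NW X) :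
    eps k (d.mul (bw k u) (bw k v)) = eps k (bw k u) * eps k (bw k v) := by
  by_cases hc : ∃ a b : List (Lt X),
    u.1.getLast? = some (Lt.brk a) ∧ v.1.head? = some (Lt.brk b)
  · obtain ⟨a, b, hua, hvb⟩ := hc
    obtain ⟨u₀, hu⟩ := List.getLast?_eq_some_iff.mp hua
    obtain ⟨v₀, hv⟩ := List.head?_eq_some_iff.mp hvb
    have ha : GoodL (Lt.brk a) :=
      u.2.1 _ (hu ▸ List.mem_append_right u₀ (List.mem_singleton_self _))
    have hb : GoodL (Lt.brk b) := v.2.1 _ (hv ▸ List.mem_cons_self)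
    have hu_ne : u ≠ one := fun h => by simp [h, one] at hu
    -- `u ⋄ v = u₀ (⌊a⌋ ⋄ ⌊b⌋) v₀`, and the middle factor lies in the image of `N_X`
    have hmid : eps k (d.mul (bw k ⟨[Lt.brk a], goodW_singleton ha⟩)
        (bw k ⟨[Lt.brk b], goodW_singleton hb⟩)) = 0 :=
      d.eps_mul_bw_NopW ⟨a, goodW_of_goodL_brk ha⟩ ⟨b, goodW_of_goodL_brk hb⟩
    rw [eps_eq_emptyWordCoeff_iota,
      d.split u v u₀ v₀ _ _ (goodW_singleton ha) (goodW_singleton hb) hu hv, map_mul, map_mul,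
      ← eps_eq_emptyWordCoeff_iota, hmid, eps_bw_of_ne k hu_ne, mul_zero, zero_mul, zero_mul]
  · rw [eps_eq_emptyWordCoeff_iota, d.concat u v hc, map_mul, ← eps_eq_emptyWordCoeff_iota,
      ← eps_eq_emptyWordCoeff_iota]

lemma eps_mul (f g : FN k X) : eps k (d.mul f g) = eps k f * eps k g := by
  suffices d.mul.compr₂ (eps k) = (LinearMap.mul k k).compl₁₂ (eps k) (eps k) from
    LinearMap.congr_fun₂ this f g
  ext u v
  exact d.eps_mul_bw u v

end DiamondSpec

def epsSmul : FN k X ⊗[k] FN k X →ₗ[k] FN k X :=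
  TensorProduct.lid k (FN k X) ∘ₗ (eps k).rTensor (FN k X)

lemma epsSmul_tmul (a b : FN k X) : epsSmul k (a ⊗ₜ[k] b) = eps k a • b := rfl

lemma epsSmul_lTensor (g : FN k X →ₗ[k] FN k X) (x : FN k X ⊗[k] FN k X) :
    epsSmul k (g.lTensor (FN k X) x) = g (epsSmul k x) := by
  suffices epsSmul k ∘ₗ g.lTensor (FN k X) = g ∘ₗ epsSmul k from LinearMap.congr_fun this x
  refine TensorProduct.ext' fun a b => ?_
  simp [epsSmul_tmul]

lemma epsSmul_mul2 (d : DiamondSpec k X) (x y : FN k X ⊗[k] FN k X) :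
    epsSmul k (mul2 k d x y) = d.mul (epsSmul k x) (epsSmul k y) := by
  suffices (mul2 k d).compr₂ (epsSmul k) = d.mul.compl₁₂ (epsSmul k) (epsSmul k) from
    LinearMap.congr_fun₂ this x y
  refine TensorProduct.ext' fun a b => TensorProduct.ext' fun c e => ?_
  simp [mul2, epsSmul_tmul, d.eps_mul, smul_smul, mul_comm]

namespace DeltaSpec

variable {k} (ds : DeltaSpec k X)

lemma epsSmul_delta_NopW {w : NW X} (hw : epsSmul k (ds.delta (bw k w)) = bw k w) :
    epsSmul k (ds.delta (bw k (NopW w))) = bw k (NopW w) := by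
  rw [← Nop_bw, ds.delta_brk, epsSmul_lTensor, hw]

lemma epsSmul_delta_cons {w : NW X} {a : Lt X} {rest : List (Lt X)} (ha : GoodW [a])
    (hrest : GoodW rest) (hw : w.1 = a :: rest) (hne : rest ≠ [])
    (iha : epsSmul k (ds.delta (bw k (⟨[a], ha⟩ : NW X))) = bw k ⟨[a], ha⟩)
    (ihrest : epsSmul k (ds.delta (bw k (⟨rest, hrest⟩ : NW X))) = bw k ⟨rest, hrest⟩) :
    epsSmul k (ds.delta (bw k w)) = bw k w := by
  rw [ds.delta_split w a rest ha hrest hw hne, epsSmul_mul2, iha, ihrest]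
  refine ds.mul_bw_of_append hw ?_
  obtain ⟨b, t, rfl⟩ := List.exists_cons_of_ne_nil hne
  have halt : altP a b := (List.isChain_cons_cons.mp (hw ▸ w.2.2)).1
  rintro ⟨a', b', ha', hb'⟩
  simp only [List.getLast?_singleton, List.head?_cons, Option.some.injEq] at ha' hb'
  rw [ha', hb'] at halt
  exact halt

lemma epsSmul_delta_bw (w : NW X) : epsSmul k (ds.delta (bw k w)) = bw k w := by
  induction hn : degList w.1 using Nat.strong_induction_on generalizing w with
  | _ n ih =>
  obtain ⟨l, hl⟩ := w
  match l, hl with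
  | [], _ =>
    rw [show (⟨[], _⟩ : NW X) = one from rfl, ds.delta_one, epsSmul_tmul, eps_bw_one, one_smul]
  | [Lt.var x], _ =>
    rw [show (⟨[Lt.var x], _⟩ : NW X) = varW x from rfl, ds.delta_var, epsSmul_tmul, eps_bw_one,
      one_smul]
  | [Lt.brk u], hl =>
    have hu := goodW_of_goodL_brk (hl.1 _ List.mem_cons_self)
    exact ds.epsSmul_delta_NopW (ih _ (by simp [← hn, degList, degL]) ⟨u, hu⟩ rfl)
  | a :: b :: t, hl =>
    have ha := degL_pos a
    have hb := degL_pos b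
    exact ds.epsSmul_delta_cons hl.head hl.tail rfl (List.cons_ne_nil b t)
      (ih _ (by simp [← hn, degList]; omega) _ rfl)
      (ih _ (by simp [← hn, degList]; omega) _ rfl)

end DeltaSpec

/-- `ε` is a left counit for `Δ` on `FN(X)`:
`(ε ⊗ id)Δ(w) = 1_k ⊗ w` for all `w ∈ FN(X)`. -/
theorem stmt9_left_counit (k : Type v) [CommRing k] {X : Type u}
    (ds : DeltaSpec k X) (w : FN k X) :
    LinearMap.rTensor (FN k X) (eps k) (ds.delta w) = (1 : k) ⊗ₜ[k] w := by
  have h : epsSmul k ∘ₗ ds.delta = LinearMap.id :=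
    Finsupp.lhom_ext' fun v => LinearMap.ext_ring (ds.epsSmul_delta_bw v)
  calc LinearMap.rTensor (FN k X) (eps k) (ds.delta w)
      = (TensorProduct.lid k (FN k X)).symm (epsSmul k (ds.delta w)) := by simp [epsSmul]
    _ = (1 : k) ⊗ₜ[k] w := by
      rw [← LinearMap.comp_apply, h, LinearMap.id_apply, TensorProduct.lid_symm_apply]

end

end Nij
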